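/- Let T = ℝ²/ℤ², let f be the Dehn twist induced by [[1,1],[0,1]], let c = [(0,0),(1,0),(1,1)] − [(0,0),(0,1),(1,1)], and define τ_k = [(0,0),(1,0),(2^{2k}+1,0),(2^{2k}+1,1)] − [(0,0),(2^{2k},0),(2^{2k}+1,0),(2^{2k}+1,1)] + [(0,0),(2^{2k},0),(2^{2k},1),(2^{2k}+1,1)] and b_k = [(0,0),(1,0),(2^{2k}+1,0)] − [(0,0),(2^{2k},0),(2^{2k}+1,0)]. Then ∂τ_k + b_k = f^{2^{2k}}_*(c) − c. -/

import Mathlib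

open Filter Topology

noncomputable section

open Filter Topology

noncomputable section

abbrev SimplexT (n : ℕ) : Type := ↥(stdSimplex ℝ (Fin (n+1)))

abbrev Spx (X : Type) [TopologicalSpace X] (n : ℕ) : Type := C(SimplexT n, X)

abbrev SChain (X : Type) [TopologicalSpace X] (n : ℕ) : Type := Spx X n →₀ ℤ

/-- The `i`-th face inclusion of standard simplices. -/
def faceMap (n : ℕ) (i : Fin (n+2)) : C(SimplexT n, SimplexT (n+1)) where
  toFun x := ⟨i.insertNth 0 x.1, by
    refine ⟨fun j => ?_, ?_⟩
    · rcases eq_or_ne j i with h | h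
      · subst h; simp
      · obtain ⟨k, rfl⟩ := Fin.exists_succAbove_eq h
        simpa using x.2.1 k
    · rw [Fin.sum_univ_succAbove _ i]
      simpa using x.2.2⟩
  continuous_toFun := by
    apply Continuous.subtype_mk
    exact (continuous_const.finInsertNth i (continuous_subtype_val))

/-- Singular boundary operator. -/
def bdry {X : Type} [TopologicalSpace X] {n : ℕ} (c : SChain X (n+1)) : SChain X n :=
  c.sum fun σ a => ∑ i : Fin (n+2), (a * (-1)^(i:ℕ)) • Finsupp.single (σ.comp (faceMap n i)) (1:ℤ)

/-- ℓ¹-norm of an integral singular chain. -/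
def l1 {X : Type} [TopologicalSpace X] {n : ℕ} (c : SChain X n) : ℤ :=
  ∑ σ ∈ c.support, |c σ|

/-- Integral filling norm of a chain. -/
def fillNorm {X : Type} [TopologicalSpace X] {n : ℕ} (z : SChain X n) : ℝ :=
  sInf {r : ℝ | ∃ b : SChain X (n+1), bdry b = z ∧ (l1 b : ℝ) = r}

/-- Pushforward of singular chains along a continuous map. -/
def push {X Y : Type} [TopologicalSpace X] [TopologicalSpace Y] (f : C(X,Y)) {n : ℕ} :
    SChain X n → SChain Y n :=
  Finsupp.mapDomain fun σ => f.comp σ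
abbrev Circle1 : Type := AddCircle (1 : ℝ)
abbrev Torus : Type := Circle1 × Circle1

/-- quotient map ℝ² → T = ℝ²/ℤ² -/
def piT : C(ℝ × ℝ, Torus) :=
  ⟨fun p => ((p.1 : Circle1), (p.2 : Circle1)),
    ((continuous_quotient_mk').comp continuous_fst).prodMk
      ((continuous_quotient_mk').comp continuous_snd)⟩

/-- quotient map ℝ → S¹ = ℝ/ℤ -/
def piS : C(ℝ, Circle1) := ⟨fun x => (x : Circle1), continuous_quotient_mk'⟩

/-- straight simplex in ℝ² with given vertices, projected to the torus -/
def strT (n : ℕ) (p : Fin (n+1) → ℝ × ℝ) : Spx Torus n :=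
  piT.comp ⟨fun x => ∑ i, (x.1 i) • p i,
    continuous_finset_sum _ fun i _ =>
      ((continuous_apply i).comp continuous_subtype_val).smul continuous_const⟩

/-- straight simplex in ℝ with given vertices, projected to the circle -/
def strS (n : ℕ) (v : Fin (n+1) → ℝ) : Spx Circle1 n :=
  piS.comp ⟨fun y => ∑ i, (y.1 i) * v i,
    continuous_finset_sum _ fun i _ =>
      ((continuous_apply i).comp continuous_subtype_val).mul continuous_const⟩

/-- The self-map of the torus induced by the matrix [[1,1],[0,1]] (Dehn twist). -/
def dehnT : C(Torus, Torus) :=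
  ⟨fun q => (q.1 + q.2, q.2), by continuity⟩

/-- standard fundamental cycle of the torus -/
def stdCycle : SChain Torus 2 :=
  Finsupp.single (strT 2 ![(0,0),(1,0),(1,1)]) 1 - Finsupp.single (strT 2 ![(0,0),(0,1),(1,1)]) 1

/-- The prism chain `τ_k` of Step 1. -/
def tauChain (k : ℕ) : SChain Torus 3 :=
  Finsupp.single (strT 3 ![(0,0),(1,0),((2^(2*k) : ℝ)+1,0),((2^(2*k) : ℝ)+1,1)]) 1
    - Finsupp.single (strT 3 ![(0,0),((2^(2*k) : ℝ),0),((2^(2*k) : ℝ)+1,0),((2^(2*k) : ℝ)+1,1)]) 1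
    + Finsupp.single (strT 3 ![(0,0),((2^(2*k) : ℝ),0),((2^(2*k) : ℝ),1),((2^(2*k) : ℝ)+1,1)]) 1

/-- The chain `b_k` of Step 1, supported on the curve `y = 0`. -/
def bChain (k : ℕ) : SChain Torus 2 :=
  Finsupp.single (strT 2 ![(0,0),(1,0),((2^(2*k) : ℝ)+1,0)]) 1
    - Finsupp.single (strT 2 ![(0,0),((2^(2*k) : ℝ),0),((2^(2*k) : ℝ)+1,0)]) 1

/-! The shear `(x, y) ↦ (x + N y, y)`, `N = 2^{2k}`, induces `f^N`, so `f^N_* c` consists of the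
straight simplices `[(0,0),(1,0),(N+1,1)]` and `[(0,0),(N,1),(N+1,1)]`. In `∂τ_k` two pairs of faces
cancel outright and a third pair cancels after a translation by `(1,0)`, which does not change a
simplex on `T`. Of the six remaining faces, two form `f^N_* c`, two are the translates by `(N,0)`
of the simplices of `c`, and two lie on `y = 0` and form `-b_k`. -/

section Chains

variable {X Y : Type} [TopologicalSpace X] [TopologicalSpace Y] {n : ℕ}

lemma bdry_single (σ : Spx X (n+1)) (a : ℤ) :
    bdry (Finsupp.single σ a)
      = ∑ i : Fin (n+2), (a * (-1)^(i:ℕ)) • Finsupp.single (σ.comp (faceMap n i)) (1:ℤ) :=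
  Finsupp.sum_single_index (by simp)

lemma bdry_add (x y : SChain X (n+1)) : bdry (x + y) = bdry x + bdry y :=
  Finsupp.sum_add_index' (fun _ => by simp) fun _ _ _ => by
    simp only [add_mul, add_smul, Finset.sum_add_distrib]

lemma bdry_sub (x y : SChain X (n+1)) : bdry (x - y) = bdry x - bdry y :=
  map_sub (AddMonoidHom.mk' bdry bdry_add) x y

lemma push_single (f : C(X, Y)) (σ : Spx X n) (a : ℤ) :
    push f (Finsupp.single σ a) = Finsupp.single (f.comp σ) a :=
  Finsupp.mapDomain_single

lemma iterate_push_sub (f : C(X, X)) (m : ℕ) (x y : SChain X n) :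
    (push f)^[m] (x - y) = (push f)^[m] x - (push f)^[m] y :=
  iterate_map_sub (Finsupp.mapDomain.addMonoidHom fun σ : Spx X n => f.comp σ) m x y

end Chains

section StraightSimplices

variable {n : ℕ}

lemma strT_comp_faceMap (p : Fin (n+2) → ℝ × ℝ) (i : Fin (n+2)) :
    (strT (n+1) p).comp (faceMap n i) = strT n (p ∘ i.succAbove) := by
  ext1 x
  show piT (∑ j, (faceMap n i x).1 j • p j) = piT (∑ j, x.1 j • p (i.succAbove j))
  simp [Fin.sum_univ_succAbove _ i, faceMap]

lemma strT_eq_of_eq_add_intCast {p q : Fin (n+1) → ℝ × ℝ} (a b : ℤ)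
    (h : ∀ i, p i = q i + ((a : ℝ), (b : ℝ))) : strT n p = strT n q := by
  ext1 x
  have hx : ∑ i, x.1 i = 1 := x.2.2
  have hsum : ∑ i, x.1 i • p i = ∑ i, x.1 i • q i + ((a : ℝ), (b : ℝ)) := by
    simp only [h, smul_add, Finset.sum_add_distrib, ← Finset.sum_smul, hx, one_smul]
  show piT (∑ i, x.1 i • p i) = piT (∑ i, x.1 i • q i)
  simp [hsum, piT]

lemma dehnT_comp_strT (p : Fin (n+1) → ℝ × ℝ) :
    dehnT.comp (strT n p) = strT n (fun i => ((p i).1 + (p i).2, (p i).2)) := by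
  ext1 x
  show dehnT (piT (∑ i, x.1 i • p i)) = piT (∑ i, x.1 i • ((p i).1 + (p i).2, (p i).2))
  simp [dehnT, piT, Prod.fst_sum, Prod.snd_sum, mul_add, Finset.sum_add_distrib]

lemma iterate_push_dehnT_single_strT (m : ℕ) (p : Fin (n+1) → ℝ × ℝ) (a : ℤ) :
    (push dehnT)^[m] (Finsupp.single (strT n p) a)
      = Finsupp.single (strT n fun i => ((p i).1 + m * (p i).2, (p i).2)) a := by
  induction m with
  | zero => simp
  | succ m ih =>
    rw [Function.iterate_succ_apply', ih, push_single, dehnT_comp_strT]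
    congr 3 with i
    · simp only [Nat.cast_succ]
      ring
    · rfl

end StraightSimplices

lemma bdry_single_strT_three (A B C D : ℝ × ℝ) :
    bdry (Finsupp.single (strT 3 ![A, B, C, D]) 1)
      = Finsupp.single (strT 2 ![B, C, D]) 1 - Finsupp.single (strT 2 ![A, C, D]) 1
        + Finsupp.single (strT 2 ![A, B, D]) 1 - Finsupp.single (strT 2 ![A, B, C]) 1 := by
  obtain ⟨h₀, h₁, h₂, h₃⟩ : ![A, B, C, D] ∘ Fin.succAbove 0 = ![B, C, D] ∧
      ![A, B, C, D] ∘ Fin.succAbove 1 = ![A, C, D] ∧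
      ![A, B, C, D] ∘ Fin.succAbove 2 = ![A, B, D] ∧
      ![A, B, C, D] ∘ Fin.succAbove 3 = ![A, B, C] := by
    refine ⟨?_, ?_, ?_, ?_⟩ <;> funext i <;> fin_cases i <;> rfl
  rw [bdry_single, Fin.sum_univ_four]
  simp only [strT_comp_faceMap, h₀, h₁, h₂, h₃]
  simp only [Int.reduceNeg, Nat.reduceAdd, Fin.isValue, Fin.coe_ofNat_eq_mod, Nat.zero_mod, pow_zero,
    mul_one, Nat.succ_eq_add_one, one_smul, Nat.one_mod, pow_one, mul_neg, neg_smul, Nat.reduceMod,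
    even_two, Even.neg_pow, one_pow, Nat.mod_succ, Int.reducePow]
  abel

lemma iterate_push_dehnT_stdCycle (m : ℕ) :
    (push dehnT)^[m] stdCycle
      = Finsupp.single (strT 2 ![(0,0), (1,0), (m+1,1)]) 1
        - Finsupp.single (strT 2 ![(0,0), (m,1), (m+1,1)]) 1 := by
  rw [stdCycle, iterate_push_sub, iterate_push_dehnT_single_strT, iterate_push_dehnT_single_strT]
  congr 3 <;> ext i <;> fin_cases i <;> simp [add_comm]

/-- Step 1: `∂τ_k + b_k = f^{2^{2k}}_* c - c`, where `f` is the Dehn twist induced by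
`[[1,1],[0,1]]` and `c` is the standard fundamental cycle of the torus. -/
theorem bdry_tauChain_add_bChain (k : ℕ) :
    bdry (tauChain k) + bChain k = (push dehnT)^[2^(2*k)] stdCycle - stdCycle := by
  set N : ℝ := 2 ^ (2 * k) with hN
  have shift_one : strT 2 ![(1,0), (N+1,0), (N+1,1)] = strT 2 ![(0,0), (N,0), (N,1)] :=
    strT_eq_of_eq_add_intCast 1 0 fun i => by fin_cases i <;> simp [add_comm]
  have shift_N₁ : strT 2 ![(N,0), (N+1,0), (N+1,1)] = strT 2 ![(0,0), (1,0), (1,1)] :=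
    strT_eq_of_eq_add_intCast (2 ^ (2 * k)) 0 fun i => by fin_cases i <;> simp [hN, add_comm]
  have shift_N₂ : strT 2 ![(N,0), (N,1), (N+1,1)] = strT 2 ![(0,0), (0,1), (1,1)] :=
    strT_eq_of_eq_add_intCast (2 ^ (2 * k)) 0 fun i => by fin_cases i <;> simp [hN, add_comm]
  rw [iterate_push_dehnT_stdCycle, tauChain, bChain, stdCycle, bdry_add, bdry_sub,
    bdry_single_strT_three, bdry_single_strT_three, bdry_single_strT_three,
    shift_one, shift_N₁, shift_N₂]
  push_cast
  abel
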